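/- For two partitioned orders μ and μ' of [n], φ(μ) = φ(μ') if and only if the matrix representations of μ and μ' are equal up to permutations of the elements within each column of each matrix; consequently the number of equivalence classes of partitioned orders under the relation φ(μ)=φ(μ') equals the sum over integer partitions i of n of n! / ∏_{j=1}^{d(i)} (m(i,j)!)^j. -/

import Mathlib

/-- A partitioned order of `[n]`: a set of pairwise disjoint nonempty lists
of distinct elements of `[n]` whose union is `[n]`. -/
structure PartitionedOrder (n : ℕ) where
  oblocks : Finset (List (Fin n))
  nonempty : ∀ S ∈ oblocks, S ≠ []
  nodup : ∀ S ∈ oblocks, S.Nodup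
  disjoint : ∀ S ∈ oblocks, ∀ T ∈ oblocks, S ≠ T → ∀ x, x ∈ S → x ∉ T
  cover : ∀ x : Fin n, ∃ S ∈ oblocks, x ∈ S

namespace PartitionedOrder

variable {n : ℕ}

/-- The block `W_ℓ = { S_k[ℓ mod n_k] : k }` of the sequential rewriting. -/
def phiBlock (μ : PartitionedOrder n) (ℓ : ℕ) : Finset (Fin n) :=
  μ.oblocks.attach.image (fun S =>
    S.1.get ⟨ℓ % S.1.length,
      Nat.mod_lt _ (List.length_pos_of_ne_nil (μ.nonempty S.1 S.2))⟩)

/-- The period `p` of a partitioned order: the lcm of its o-block lengths. -/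
def period (μ : PartitionedOrder n) : ℕ := μ.oblocks.lcm List.length

/-- The sequential rewriting `φ(μ) = (W_0, …, W_{p-1})`. -/
def phi (μ : PartitionedOrder n) : List (Finset (Fin n)) :=
  (List.range μ.period).map μ.phiBlock

end PartitionedOrder

/-- An ordered partition of `[n]` (block-sequential update mode): a sequence of
nonempty pairwise disjoint subsets of `[n]` whose union is `[n]`. -/
def IsOrderedPartition {n : ℕ} (L : List (Finset (Fin n))) : Prop :=
  (∀ W ∈ L, W.Nonempty) ∧ L.Pairwise Disjoint ∧ ∀ x : Fin n, ∃ W ∈ L, x ∈ W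

/-- `m(i,j)`: the multiplicity of the part of size `j` in the partition `i`. -/
def Nat.Partition.mult {n : ℕ} (i : n.Partition) (j : ℕ) : ℕ :=
  Multiset.count j i.parts

/-- `d(i)`: the largest part of the partition `i` (0 for the empty partition). -/
def Nat.Partition.dmax {n : ℕ} (i : n.Partition) : ℕ :=
  i.parts.toFinset.sup id

/-- `lcm(i)`: the least common multiple of the distinct part sizes of `i`. -/
def Nat.Partition.lcmParts {n : ℕ} (i : n.Partition) : ℕ :=
  i.parts.toFinset.lcm id

/-- The set of entries in column `ℓ` of the matrix `M_j` of the matrix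
representation of `μ` (entries at position `ℓ` of the o-blocks of length `j`). -/
def PartitionedOrder.colSet {n : ℕ} (μ : PartitionedOrder n) (j ℓ : ℕ) :
    Set (Fin n) :=
  {x | ∃ S ∈ μ.oblocks, S.length = j ∧ S[ℓ]? = some x}

/-!
An entry `x` of `μ` sits at a position `(j, r)`: its o-block has length `j` and `x` is its
`r`-th element, i.e. `x` lies in column `r` of `M_j`. Then `x ∈ W_ℓ` iff `ℓ ≡ r [MOD j]`; since
`j` divides the period, `φ(μ)` determines this residue class, and a residue class `r mod j` with
`r < j` determines `(j, r)`. Hence `φ(μ)` and the position map `x ↦ (j, r)` determine each other.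

A map `g : [n] → ℕ × ℕ` is the position map of a partitioned order of shape `i` iff each fibre
`g⁻¹(j, r)`, `r < j`, has `m(i,j)` elements: the fibres are the columns of the `M_j`, and any
way of cutting them into rows gives a partitioned order. For fixed `i` these maps form one orbit
of `Perm (Fin n)` acting on the domain, and the stabiliser permutes each fibre, so it has order
`∏_j (m(i,j)!)^j`.
-/

open Finset Equiv
open scoped Nat

theorem Nat.eq_and_eq_of_forall_mod_eq_iff {j r j' r' : ℕ} (hr : r < j) (hr' : r' < j')
    (h : ∀ ℓ, ℓ % j = r ↔ ℓ % j' = r') : j = j' ∧ r = r' := by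
  have dvd_of_forall {j r j' r' : ℕ} (hr : r < j) (h : ∀ ℓ, ℓ % j = r ↔ ℓ % j' = r') :
      j' ∣ j := by
    have hshift : r + j ≡ r + 0 [MOD j'] :=
      ((h (r + j)).1 (by simp [Nat.mod_eq_of_lt hr])).trans
        ((h r).1 (Nat.mod_eq_of_lt hr)).symm
    exact Nat.modEq_zero_iff_dvd.1 (hshift.add_left_cancel' r)
  obtain rfl : j = j' :=
    Nat.dvd_antisymm (dvd_of_forall hr' fun ℓ => (h ℓ).symm) (dvd_of_forall hr h)
  have := (h r).1 (Nat.mod_eq_of_lt hr)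
  exact ⟨rfl, by rwa [Nat.mod_eq_of_lt hr] at this⟩

section FiberCard

variable {α β : Type*} [Fintype α] [DecidableEq β]

theorem exists_card_fiber_eq (s : Finset β) (c : β → ℕ) (hc : ∀ b ∉ s, c b = 0)
    (hsum : ∑ b ∈ s, c b = Fintype.card α) :
    ∃ g : α → β, ∀ b, Fintype.card {x // g x = b} = c b := by
  have hcard : Fintype.card (Σ b : s, Fin (c b)) = Fintype.card α := by
    simpa [Fintype.card_sigma] using (s.sum_coe_sort c).trans hsum
  let e := (Fintype.equivOfCardEq hcard).symm
  refine ⟨fun x => (e x).1, fun b => ?_⟩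
  refine (Fintype.card_congr
    (e.subtypeEquiv (q := fun y => (y.1 : β) = b) fun _ => Iff.rfl)).trans ?_
  by_cases hb : b ∈ s
  · rw [← Fintype.card_fin (c b)]
    exact Fintype.card_congr
      ((subtypeEquivRight fun y => (Subtype.ext_iff (a2 := ⟨b, hb⟩)).symm).trans
        (sigmaSubtype (β := fun b : s => Fin (c b)) ⟨b, hb⟩))
  · rw [hc b hb, Fintype.card_eq_zero_iff]
    exact ⟨fun y => hb (y.2 ▸ y.1.1.2)⟩

theorem DomMulAct.mem_orbit_iff_card_fiber_eq {g₀ g : α → β} :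
    g ∈ MulAction.orbit (Perm α)ᵈᵐᵃ g₀ ↔
      ∀ b, Fintype.card {x // g x = b} = Fintype.card {x // g₀ x = b} := by
  constructor
  · rintro ⟨σ, rfl⟩ b
    exact Fintype.card_congr ((DomMulAct.mk.symm σ).subtypeEquiv fun _ => Iff.rfl)
  · intro h
    refine ⟨DomMulAct.mk (Equiv.ofFiberEquiv fun b => Fintype.equivOfCardEq (h b)), ?_⟩
    funext x
    exact Equiv.ofFiberEquiv_map _ x

variable [DecidableEq α]

theorem card_fiber_eq_mul_prod_factorial (g₀ : α → β) :
    Nat.card {g : α → β // ∀ b, Fintype.card {x // g x = b} = Fintype.card {x // g₀ x = b}} *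
      ∏ b ∈ univ.image g₀, (Fintype.card {x // g₀ x = b})! = (Fintype.card α)! := by
  let H := MulAction.stabilizer (Perm α)ᵈᵐᵃ g₀
  have hH : Nat.card H = Fintype.card {σ : Perm α // g₀ ∘ σ = g₀} := by
    rw [← Nat.card_eq_fintype_card]
    exact Nat.card_congr (subtypeEquiv DomMulAct.mk.symm fun _ => DomMulAct.mem_stabilizer_iff)
  have horbit : Nat.card {g : α → β // ∀ b,
      Fintype.card {x // g x = b} = Fintype.card {x // g₀ x = b}} = H.index := by
    rw [MulAction.index_stabilizer, ← Nat.card_coe_set_eq]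
    exact Nat.card_congr
      (subtypeEquivRight fun _ => DomMulAct.mem_orbit_iff_card_fiber_eq.symm)
  rw [horbit, ← DomMulAct.stabilizer_card', ← hH, mul_comm, H.card_mul_index, ← Fintype.card_perm,
    ← Nat.card_eq_fintype_card]
  exact Nat.card_congr DomMulAct.mk.symm

end FiberCard

namespace Nat.Partition

variable {n : ℕ}

/-- The number of entries in column `p.2` of the matrix `M_{p.1}` of a partitioned order of
shape `i`. -/
def columnSize (i : n.Partition) (p : ℕ × ℕ) : ℕ :=
  if p.2 < p.1 then i.mult p.1 else 0

theorem columnSize_of_lt (i : n.Partition) {j r : ℕ} (h : r < j) :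
    i.columnSize (j, r) = i.mult j :=
  if_pos h

/-- `g` puts as many entries into each column of each `M_j` as a partitioned order of shape `i`
has there. -/
def IsColumnMap (i : n.Partition) (g : Fin n → ℕ × ℕ) : Prop :=
  ∀ p, Fintype.card {x // g x = p} = i.columnSize p

theorem columnSize_injective : Function.Injective (columnSize (n := n)) := by
  intro i i' h
  ext j
  by_cases hj : 0 < j
  · have := congrFun h (j, 0)
    rwa [columnSize_of_lt _ hj, columnSize_of_lt _ hj] at this
  · obtain rfl : j = 0 := by omega
    rw [Multiset.count_eq_zero.2 fun h => (i.parts_pos h).ne' rfl,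
      Multiset.count_eq_zero.2 fun h => (i'.parts_pos h).ne' rfl]

def cells (i : n.Partition) : Finset (ℕ × ℕ) :=
  (i.parts.toFinset ×ˢ range i.dmax).filter fun p => p.2 < p.1

theorem mem_cells {i : n.Partition} {p : ℕ × ℕ} : p ∈ i.cells ↔ p.1 ∈ i.parts ∧ p.2 < p.1 := by
  have hle : p.1 ∈ i.parts → p.1 ≤ i.dmax := fun h =>
    le_sup (f := id) (Multiset.mem_toFinset.2 h)
  simp only [cells, mem_filter, mem_product, Multiset.mem_toFinset, mem_range]
  constructor
  · exact fun h => ⟨h.1.1, h.2⟩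
  · exact fun h => ⟨⟨h.1, by have := hle h.1; omega⟩, h.2⟩

theorem columnSize_ne_zero_iff {i : n.Partition} {p : ℕ × ℕ} :
    i.columnSize p ≠ 0 ↔ p ∈ i.cells := by
  by_cases hp : p.2 < p.1 <;> simp [columnSize, mem_cells, mult, hp]

theorem sum_columnSize (i : n.Partition) : ∑ p ∈ i.cells, i.columnSize p = n := by
  rw [sum_finset_product _ i.parts.toFinset (fun j => range j) fun p => by simp [mem_cells]]
  calc ∑ j ∈ i.parts.toFinset, ∑ r ∈ range j, i.columnSize (j, r)
      = ∑ j ∈ i.parts.toFinset, i.parts.count j • j := by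
        refine sum_congr rfl fun j _ => ?_
        rw [sum_congr rfl fun r hr => i.columnSize_of_lt (mem_range.1 hr), sum_const, card_range,
          smul_eq_mul, smul_eq_mul, mul_comm, mult]
    _ = n := by rw [← Finset.sum_multiset_count, i.parts_sum]

theorem prod_factorial_columnSize (i : n.Partition) :
    ∏ p ∈ i.cells, (i.columnSize p)! = ∏ j ∈ Icc 1 i.dmax, (i.mult j)! ^ j := by
  rw [prod_finset_product _ i.parts.toFinset (fun j => range j) fun p => by simp [mem_cells]]
  calc ∏ j ∈ i.parts.toFinset, ∏ r ∈ range j, (i.columnSize (j, r))!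
      = ∏ j ∈ i.parts.toFinset, (i.mult j)! ^ j := by
        refine prod_congr rfl fun j _ => ?_
        rw [prod_congr rfl fun r hr => by rw [i.columnSize_of_lt (mem_range.1 hr)], prod_const,
          card_range]
    _ = ∏ j ∈ Icc 1 i.dmax, (i.mult j)! ^ j := by
        refine prod_subset (fun j hj => mem_Icc.2 ⟨i.parts_pos (Multiset.mem_toFinset.1 hj),
          le_sup (f := id) hj⟩) fun j _ hj => ?_
        rw [mult, Multiset.count_eq_zero.2 (fun h => hj (Multiset.mem_toFinset.2 h))]
        simp

theorem card_isColumnMap_mul_prod (i : n.Partition) :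
    Nat.card {g : Fin n → ℕ × ℕ // i.IsColumnMap g} *
      ∏ j ∈ Icc 1 i.dmax, (i.mult j)! ^ j = n ! := by
  obtain ⟨g₀, hg₀⟩ := exists_card_fiber_eq i.cells i.columnSize
    (fun p hp => by_contra fun h => hp (columnSize_ne_zero_iff.1 h))
    (by rw [sum_columnSize, Fintype.card_fin])
  have hcells : ∏ p ∈ univ.image g₀, (Fintype.card {x // g₀ x = p})! =
      ∏ p ∈ i.cells, (i.columnSize p)! := by
    simp_rw [hg₀]
    refine prod_subset (fun p hp => ?_) fun p _ hp => ?_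
    · obtain ⟨x, -, rfl⟩ := mem_image.1 hp
      rw [← columnSize_ne_zero_iff, ← hg₀]
      exact (Fintype.card_pos_iff.2 ⟨⟨x, rfl⟩⟩).ne'
    · rw [← hg₀, Fintype.card_eq_zero_iff.2
        ⟨fun y : {y // g₀ y = p} => hp (y.2 ▸ mem_image_of_mem g₀ (mem_univ y.1))⟩,
        factorial_zero]
  have := card_fiber_eq_mul_prod_factorial g₀
  rw [hcells, prod_factorial_columnSize, Fintype.card_fin] at this
  simpa only [IsColumnMap, hg₀] using this

instance (i : n.Partition) :
    Finite {g : Fin n → ℕ × ℕ // i.IsColumnMap g} :=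
  Nat.finite_of_card_ne_zero fun h => (n.factorial_ne_zero (by
    rw [← i.card_isColumnMap_mul_prod, h, zero_mul]))

end Nat.Partition

namespace PartitionedOrder

variable {n : ℕ} (μ : PartitionedOrder n)

theorem existsUnique_mem_oblocks (x : Fin n) : ∃! S, S ∈ μ.oblocks ∧ x ∈ S := by
  obtain ⟨S, hS, hx⟩ := μ.cover x
  exact ⟨S, ⟨hS, hx⟩, fun T ⟨hT, hxT⟩ => by_contra fun hne => μ.disjoint T hT S hS hne x hxT hx⟩

noncomputable def block (x : Fin n) : List (Fin n) :=
  μ.oblocks.choose (x ∈ ·) (μ.existsUnique_mem_oblocks x)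

theorem block_mem_oblocks (x : Fin n) : μ.block x ∈ μ.oblocks :=
  choose_mem _ _ _

theorem mem_block (x : Fin n) : x ∈ μ.block x :=
  choose_property _ _ _

theorem block_eq_of_mem {x : Fin n} {S : List (Fin n)} (hS : S ∈ μ.oblocks) (hx : x ∈ S) :
    μ.block x = S :=
  (μ.existsUnique_mem_oblocks x).unique ⟨μ.block_mem_oblocks x, μ.mem_block x⟩ ⟨hS, hx⟩

/-- `x` lies in column `(μ.column x).2` of the matrix `M_{(μ.column x).1}`. -/
noncomputable def column (x : Fin n) : ℕ × ℕ :=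
  ((μ.block x).length, (μ.block x).idxOf x)

theorem column_snd_lt_fst (x : Fin n) : (μ.column x).2 < (μ.column x).1 :=
  List.idxOf_lt_length_iff.2 (μ.mem_block x)

theorem getElem_block_column_snd (x : Fin n) :
    (μ.block x)[(μ.column x).2]'(μ.column_snd_lt_fst x) = x :=
  List.getElem_idxOf _

theorem column_getElem {S : List (Fin n)} (hS : S ∈ μ.oblocks) {k : ℕ} (hk : k < S.length) :
    μ.column S[k] = (S.length, k) := by
  rw [column, μ.block_eq_of_mem hS (List.getElem_mem hk), (μ.nodup S hS).idxOf_getElem]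

theorem mem_colSet_iff {x : Fin n} {j ℓ : ℕ} : x ∈ μ.colSet j ℓ ↔ μ.column x = (j, ℓ) := by
  constructor
  · rintro ⟨S, hS, rfl, hx⟩
    obtain ⟨hℓ, rfl⟩ := List.getElem?_eq_some_iff.1 hx
    exact μ.column_getElem hS hℓ
  · intro h
    obtain ⟨rfl, rfl⟩ := Prod.ext_iff.1 h
    exact ⟨μ.block x, μ.block_mem_oblocks x, rfl, List.getElem?_idxOf (μ.mem_block x)⟩

theorem mem_phiBlock_iff {x : Fin n} {ℓ : ℕ} :
    x ∈ μ.phiBlock ℓ ↔ ℓ % (μ.column x).1 = (μ.column x).2 := by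
  simp only [phiBlock, mem_image, mem_attach, true_and, Subtype.exists, List.get_eq_getElem]
  constructor
  · rintro ⟨S, hS, rfl⟩
    rw [μ.column_getElem hS]
  · intro (h : ℓ % (μ.block x).length = (μ.block x).idxOf x)
    refine ⟨μ.block x, μ.block_mem_oblocks x, ?_⟩
    simp_rw [h]
    exact μ.getElem_block_column_snd x

theorem column_fst_dvd_period (x : Fin n) : (μ.column x).1 ∣ μ.period :=
  dvd_lcm (μ.block_mem_oblocks x)

theorem period_eq_lcm_column : μ.period = univ.lcm fun x => (μ.column x).1 := by
  refine Nat.dvd_antisymm (Finset.lcm_dvd fun S hS => ?_) (Finset.lcm_dvd fun x _ =>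
    μ.column_fst_dvd_period x)
  obtain ⟨x, hx⟩ := List.exists_mem_of_ne_nil S (μ.nonempty S hS)
  have : (μ.column x).1 = S.length := by rw [column, μ.block_eq_of_mem hS hx]
  exact this ▸ dvd_lcm (mem_univ x)

theorem period_pos : 0 < μ.period :=
  Nat.pos_of_ne_zero fun h => by
    obtain ⟨S, hS, hlen⟩ := Finset.lcm_eq_zero_iff.1 h
    exact μ.nonempty S hS (List.eq_nil_of_length_eq_zero hlen)

theorem phiBlock_mod_period (ℓ : ℕ) : μ.phiBlock (ℓ % μ.period) = μ.phiBlock ℓ := by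
  ext x
  rw [mem_phiBlock_iff, mem_phiBlock_iff, Nat.mod_mod_of_dvd _ (μ.column_fst_dvd_period x)]

theorem sum_length_oblocks : ∑ S ∈ μ.oblocks, S.length = n := by
  have hcover : μ.oblocks.biUnion List.toFinset = univ := eq_univ_of_forall fun x => by
    obtain ⟨S, hS, hx⟩ := μ.cover x
    exact mem_biUnion.2 ⟨S, hS, List.mem_toFinset.2 hx⟩
  have hdisj : (μ.oblocks : Set (List (Fin n))).PairwiseDisjoint List.toFinset :=
    fun S hS T hT hne => disjoint_left.2 fun x hxS hxT =>
      μ.disjoint S hS T hT hne x (List.mem_toFinset.1 hxS) (List.mem_toFinset.1 hxT)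
  calc ∑ S ∈ μ.oblocks, S.length = ∑ S ∈ μ.oblocks, S.toFinset.card :=
        sum_congr rfl fun S hS => (List.toFinset_card_of_nodup (μ.nodup S hS)).symm
    _ = n := by rw [← card_biUnion hdisj, hcover, card_univ, Fintype.card_fin]

/-- The partition `i` of `n` underlying `μ`. -/
def shape : n.Partition where
  parts := μ.oblocks.val.map List.length
  parts_pos hj := by
    obtain ⟨S, hS, rfl⟩ := Multiset.mem_map.1 hj
    exact List.length_pos_of_ne_nil (μ.nonempty S hS)
  parts_sum := μ.sum_length_oblocks

theorem shape_mult (j : ℕ) : μ.shape.mult j = #{S ∈ μ.oblocks | S.length = j} := by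
  simp only [Nat.Partition.mult, shape, Multiset.count_map, card_def, filter_val, eq_comm]

theorem card_column_eq_of_lt {j r : ℕ} (hr : r < j) :
    #{x | μ.column x = (j, r)} = #{S ∈ μ.oblocks | S.length = j} := by
  symm
  refine card_bij (fun S hS => S[r]'((mem_filter.1 hS).2 ▸ hr)) (fun S hS => ?_)
    (fun S hS T hT hST => ?_) fun x hx => ?_
  · obtain ⟨hSo, rfl⟩ := mem_filter.1 hS
    exact mem_filter.2 ⟨mem_univ _, μ.column_getElem hSo _⟩
  · have hSr : r < S.length := (mem_filter.1 hS).2 ▸ hr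
    have hTr : r < T.length := (mem_filter.1 hT).2 ▸ hr
    rw [← μ.block_eq_of_mem (mem_filter.1 hS).1 (List.getElem_mem hSr), hST,
      μ.block_eq_of_mem (mem_filter.1 hT).1 (List.getElem_mem hTr)]
  · obtain ⟨rfl, rfl⟩ : (μ.block x).length = j ∧ (μ.block x).idxOf x = r :=
      Prod.ext_iff.1 (mem_filter.1 hx).2
    exact ⟨μ.block x, mem_filter.2 ⟨μ.block_mem_oblocks x, rfl⟩, μ.getElem_block_column_snd x⟩

theorem isColumnMap_column : μ.shape.IsColumnMap μ.column := fun p => by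
  rw [Fintype.card_subtype, Nat.Partition.columnSize]
  split_ifs with hp
  · rw [μ.shape_mult, ← μ.card_column_eq_of_lt hp]
  · exact card_eq_zero.2 (filter_eq_empty_iff.2 fun x _ hx => hp (hx ▸ μ.column_snd_lt_fst x))

variable {μ} {μ' : PartitionedOrder n}

theorem shape_eq_of_column_eq (h : μ.column = μ'.column) : μ.shape = μ'.shape :=
  Nat.Partition.columnSize_injective <| funext fun p => by
    rw [← isColumnMap_column, ← isColumnMap_column, h]

theorem phiBlock_eq_iff_column_eq : μ.phiBlock = μ'.phiBlock ↔ μ.column = μ'.column := by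
  constructor
  · intro h
    funext x
    obtain ⟨h₁, h₂⟩ := Nat.eq_and_eq_of_forall_mod_eq_iff (μ.column_snd_lt_fst x)
      (μ'.column_snd_lt_fst x) fun ℓ => by rw [← mem_phiBlock_iff, ← mem_phiBlock_iff, h]
    exact Prod.ext h₁ h₂
  · intro h
    funext ℓ
    ext x
    rw [mem_phiBlock_iff, mem_phiBlock_iff, h]

theorem phi_eq_iff_column_eq : μ.phi = μ'.phi ↔ μ.column = μ'.column := by
  constructor
  · intro h
    have hp : μ.period = μ'.period := by simpa [phi] using congrArg List.length h
    refine phiBlock_eq_iff_column_eq.1 (funext fun ℓ => ?_)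
    have hℓ := congrArg (·[ℓ % μ.period]?) h
    have hlt : ℓ % μ.period < μ'.period := hp ▸ Nat.mod_lt ℓ μ.period_pos
    simp only [phi, List.getElem?_map, List.getElem?_range (Nat.mod_lt _ μ.period_pos),
      List.getElem?_range hlt, Option.map_some, Option.some_inj] at hℓ
    rw [← phiBlock_mod_period, hℓ, hp, phiBlock_mod_period]
  · intro h
    rw [phi, phi, μ.period_eq_lcm_column, μ'.period_eq_lcm_column, h,
      phiBlock_eq_iff_column_eq.2 h]

theorem column_eq_iff_colSet_eq :
    μ.column = μ'.column ↔ ∀ j ℓ, ℓ < j → μ.colSet j ℓ = μ'.colSet j ℓ := by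
  constructor
  · intro h j ℓ _
    ext x
    rw [mem_colSet_iff, mem_colSet_iff, h]
  · intro h
    funext x
    have hx : x ∈ μ.colSet (μ.column x).1 (μ.column x).2 := μ.mem_colSet_iff.2 rfl
    rw [h _ _ (μ.column_snd_lt_fst x), mem_colSet_iff] at hx
    exact hx.symm

section OfColumnMap

variable (g : Fin n → ℕ × ℕ)

def columnList (p : ℕ × ℕ) : List (Fin n) :=
  ({x | g x = p} : Finset (Fin n)).sort (· ≤ ·)

def rowIdx (x : Fin n) : ℕ :=
  (columnList g (g x)).idxOf x

/-- The row of `M_{(g x).1}` through `x`. The default `x` of `getD` is never reached when the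
columns of each `M_j` have equal sizes. -/
def rowList (x : Fin n) : List (Fin n) :=
  (List.range (g x).1).map fun r => (columnList g ((g x).1, r)).getD (rowIdx g x) x

variable {g} {i : n.Partition}

theorem mem_columnList {x : Fin n} {p : ℕ × ℕ} : x ∈ columnList g p ↔ g x = p := by
  simp [columnList]

theorem nodup_columnList (p : ℕ × ℕ) : (columnList g p).Nodup :=
  sort_nodup _ _

theorem length_columnList (hg : i.IsColumnMap g)
    (p : ℕ × ℕ) : (columnList g p).length = i.columnSize p := by
  rw [columnList, length_sort, ← hg p, Fintype.card_subtype]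

theorem length_rowList (x : Fin n) : (rowList g x).length = (g x).1 := by
  simp [rowList]

theorem snd_lt_fst_of_isColumnMap (hg : i.IsColumnMap g)
    (x : Fin n) : (g x).2 < (g x).1 := by
  by_contra h
  have hpos := Fintype.card_pos_iff.2 ⟨(⟨x, rfl⟩ : {y // g y = g x})⟩
  rw [hg, Nat.Partition.columnSize, if_neg h] at hpos
  exact hpos.false

theorem rowIdx_lt_length (hg : i.IsColumnMap g)
    (x : Fin n) {r : ℕ} (hr : r < (g x).1) :
    rowIdx g x < (columnList g ((g x).1, r)).length := by
  have hcol : i.columnSize (g x) = i.mult (g x).1 :=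
    i.columnSize_of_lt (snd_lt_fst_of_isColumnMap hg x)
  rw [length_columnList hg, i.columnSize_of_lt hr, ← hcol, ← length_columnList hg]
  exact List.idxOf_lt_length_iff.2 (mem_columnList.2 rfl)

theorem getElem_rowList (hg : i.IsColumnMap g)
    (x : Fin n) {r : ℕ} (hr : r < (rowList g x).length) :
    (rowList g x)[r] = (columnList g ((g x).1, r))[rowIdx g x]'
      (rowIdx_lt_length hg x (length_rowList x ▸ hr)) := by
  simp only [rowList, List.getElem_map, List.getElem_range]
  exact List.getD_eq_getElem _ _ _

theorem apply_getElem_rowList (hg : i.IsColumnMap g)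
    (x : Fin n) {r : ℕ} (hr : r < (rowList g x).length) :
    g (rowList g x)[r] = ((g x).1, r) := by
  rw [getElem_rowList hg]
  exact mem_columnList.1 (List.getElem_mem _)

theorem rowIdx_getElem_rowList (hg : i.IsColumnMap g)
    (x : Fin n) {r : ℕ} (hr : r < (rowList g x).length) :
    rowIdx g (rowList g x)[r] = rowIdx g x := by
  rw [rowIdx, apply_getElem_rowList hg, getElem_rowList hg,
    (nodup_columnList _).idxOf_getElem]

theorem getElem_rowList_snd (hg : i.IsColumnMap g)
    (x : Fin n) :
    (rowList g x)[(g x).2]'(length_rowList x ▸ snd_lt_fst_of_isColumnMap hg x) = x := by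
  rw [getElem_rowList hg]
  exact List.getElem_idxOf _

theorem mem_rowList_self (hg : i.IsColumnMap g)
    (x : Fin n) : x ∈ rowList g x := by
  have h := List.getElem_mem (length_rowList x ▸ snd_lt_fst_of_isColumnMap hg x :
    (g x).2 < (rowList g x).length)
  rwa [getElem_rowList_snd hg] at h

theorem nodup_rowList (hg : i.IsColumnMap g)
    (x : Fin n) : (rowList g x).Nodup := by
  have hmap : (rowList g x).map g = (List.range (g x).1).map ((g x).1, ·) :=
    List.ext_getElem (by simp [length_rowList]) fun k _ _ => by
      simp [apply_getElem_rowList hg]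
  exact List.Nodup.of_map g (hmap ▸ List.nodup_range.map fun _ _ h => (Prod.mk.inj h).2)

theorem rowList_eq_of_mem (hg : i.IsColumnMap g)
    {x y : Fin n} (hy : y ∈ rowList g x) : rowList g y = rowList g x := by
  obtain ⟨r, hr, rfl⟩ := List.getElem_of_mem hy
  have hcol := apply_getElem_rowList hg x hr
  have hrow := rowIdx_getElem_rowList hg x hr
  refine List.ext_getElem (by rw [length_rowList, length_rowList, hcol]) fun k hk hk' => ?_
  rw [getElem_rowList hg _ hk, getElem_rowList hg _ hk']
  simp only [hcol, hrow]

def ofColumnMap (hg : i.IsColumnMap g) :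
    PartitionedOrder n where
  oblocks := univ.image (rowList g)
  nonempty := by
    simp only [mem_image, mem_univ, true_and, forall_exists_index, forall_apply_eq_imp_iff]
    exact fun x => List.ne_nil_of_mem (mem_rowList_self hg x)
  nodup := by
    simp only [mem_image, mem_univ, true_and, forall_exists_index, forall_apply_eq_imp_iff]
    exact nodup_rowList hg
  disjoint := by
    simp only [mem_image, mem_univ, true_and, forall_exists_index, forall_apply_eq_imp_iff]
    exact fun a b hne y hya hyb =>
      hne ((rowList_eq_of_mem hg hya).symm.trans (rowList_eq_of_mem hg hyb))
  cover x := ⟨rowList g x, mem_image_of_mem _ (mem_univ x), mem_rowList_self hg x⟩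

theorem column_ofColumnMap (hg : i.IsColumnMap g) :
    (ofColumnMap hg).column = g := funext fun x => by
  have h := (ofColumnMap hg).column_getElem (mem_image_of_mem (rowList g) (mem_univ x))
    (length_rowList x ▸ snd_lt_fst_of_isColumnMap hg x)
  rwa [getElem_rowList_snd hg, length_rowList] at h

end OfColumnMap

noncomputable def quotPhiEquiv (n : ℕ) :
    Quot (fun μ μ' : PartitionedOrder n => μ.phi = μ'.phi) ≃
      Σ i : n.Partition,
        {g : Fin n → ℕ × ℕ // i.IsColumnMap g} where
  toFun := Quot.lift (fun μ => ⟨μ.shape, μ.column, μ.isColumnMap_column⟩) fun _ _ h =>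
    Sigma.subtype_ext (shape_eq_of_column_eq (phi_eq_iff_column_eq.1 h))
      (phi_eq_iff_column_eq.1 h)
  invFun x := Quot.mk _ (ofColumnMap x.2.2)
  left_inv := Quot.ind fun _ => Quot.sound (phi_eq_iff_column_eq.2 (column_ofColumnMap _))
  right_inv := fun ⟨_, _, hg⟩ => Sigma.subtype_ext
    (Nat.Partition.columnSize_injective (funext fun p => by
      rw [← isColumnMap_column, column_ofColumnMap, hg]))
    (column_ofColumnMap hg)

end PartitionedOrder

open Finset in
theorem phi_eq_iff_col_eq_and_card_general (n : ℕ) :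
    (∀ μ μ' : PartitionedOrder n,
      μ.phi = μ'.phi ↔ ∀ j ℓ, ℓ < j → μ.colSet j ℓ = μ'.colSet j ℓ) ∧
    Nat.card (Quot (fun μ μ' : PartitionedOrder n => μ.phi = μ'.phi)) =
      ∑ i : n.Partition,
        n.factorial / ∏ j ∈ Icc 1 i.dmax, (i.mult j).factorial ^ j := by
  refine ⟨fun μ μ' => PartitionedOrder.phi_eq_iff_column_eq.trans
    PartitionedOrder.column_eq_iff_colSet_eq, ?_⟩
  rw [Nat.card_congr (PartitionedOrder.quotPhiEquiv n), Nat.card_sigma]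
  refine sum_congr rfl fun i _ => ?_
  rw [← i.card_isColumnMap_mul_prod,
    Nat.mul_div_cancel _ (prod_pos fun j _ => pow_pos (Nat.factorial_pos _) _)]

open Finset in
/-- `φ(μ) = φ(μ')` iff the matrix representations agree up to
permutations within columns; consequently the number of `≡₀`-classes is
`∑_i n! / ∏_j (m(i,j)!)^j`. -/
theorem phi_eq_iff_col_eq_and_card (n : ℕ) (hn : 1 ≤ n) :
    (∀ μ μ' : PartitionedOrder n,
      μ.phi = μ'.phi ↔ ∀ j ℓ, ℓ < j → μ.colSet j ℓ = μ'.colSet j ℓ) ∧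
    Nat.card (Quot (fun μ μ' : PartitionedOrder n => μ.phi = μ'.phi)) =
      ∑ i : n.Partition,
        n.factorial / ∏ j ∈ Icc 1 i.dmax, (i.mult j).factorial ^ j :=
  phi_eq_iff_col_eq_and_card_general n
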